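/- arXiv:2308.04850 — 3 statements merged into one kernel-verified Lean document; each statement's English description precedes it below -/
import Mathlib

section
/- Let ℙ be a probability measure on ℝ that is absolutely continuous with respect to Lebesgue measure with a density ρ satisfying ρ(s) ≤ C for Lebesgue-almost every s, where C > 0. Let h : ℝ → ℝ be ℙ-integrable with h(s) ≥ m for ℙ-almost every s, let h̄ := ∫ h dℙ, and suppose h̄ > m. Then the Lebesgue measure of the set {s ∈ ℝ : h(s) ≤ h̄} is at least (∫ |h − h̄| dℙ) / (2·C·(h̄ − m)). -/
/-!
Write `h = h̄ + (h - h̄)`. Since `h - h̄` has mean zero, its positive and negative parts have the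
same integral, so `∫ |h - h̄| dℙ = 2 ∫ (h - h̄)⁻ dℙ`. The negative part vanishes off
`S = {h ≤ h̄}` and is at most `h̄ - m` on it, whence `∫ |h - h̄| dℙ ≤ 2 (h̄ - m) ℙ(S)`, and the
density bound gives `ℙ(S) ≤ C · Leb(S)`.
-/

open MeasureTheory
open scoped ENNReal

section

variable {α : Type*} [MeasurableSpace α] {μ : Measure α}

theorem integral_abs_eq_two_mul_integral_negPart {f : α → ℝ} (hf : Integrable f μ)
    (hf₀ : ∫ x, f x ∂μ = 0) :
    ∫ x, |f x| ∂μ = 2 * ∫ x, max (-f x) 0 ∂μ := by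
  have hpointwise : ∀ x, |f x| = 2 * max (-f x) 0 + f x := fun x => by
    have := posPart_add_negPart (f x)
    have := posPart_sub_negPart (f x)
    rw [← negPart_def]
    linarith
  simp_rw [hpointwise]
  rw [integral_add (hf.neg_part.const_mul 2) hf, hf₀, integral_const_mul, add_zero]

theorem ofReal_integral_negPart_sub_le [IsFiniteMeasure μ] {h : α → ℝ} (hint : Integrable h μ)
    {m t : ℝ} (hm : ∀ᵐ x ∂μ, m ≤ h x) :
    ENNReal.ofReal (∫ x, max (-(h x - t)) 0 ∂μ) ≤ ENNReal.ofReal (t - m) * μ {x | h x ≤ t} := by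
  rw [ofReal_integral_eq_lintegral_ofReal (f := fun x => max (-(h x - t)) 0)
    (hint.sub (integrable_const t)).neg_part
    (.of_forall fun x => le_max_right _ _)]
  calc ∫⁻ x, ENNReal.ofReal (max (-(h x - t)) 0) ∂μ
      ≤ ∫⁻ x, {x | h x ≤ t}.indicator (fun _ => ENNReal.ofReal (t - m)) x ∂μ := by
        refine lintegral_mono_ae (hm.mono fun x hx => ?_)
        by_cases hxt : h x ≤ t
        · rw [Set.indicator_of_mem (s := {x | h x ≤ t}) hxt]
          exact ENNReal.ofReal_le_ofReal (max_le (by linarith) (by linarith))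
        · rw [Set.indicator_of_notMem (s := {x | h x ≤ t}) hxt, max_eq_right (by linarith),
            ENNReal.ofReal_zero]
    _ ≤ ENNReal.ofReal (t - m) * μ {x | h x ≤ t} := lintegral_indicator_const_le _ _

theorem ofReal_integral_abs_sub_integral_le [IsProbabilityMeasure μ] {h : α → ℝ}
    (hint : Integrable h μ) {m : ℝ} (hm : ∀ᵐ x ∂μ, m ≤ h x) :
    ENNReal.ofReal (∫ x, |h x - ∫ y, h y ∂μ| ∂μ) ≤
      2 * ENNReal.ofReal ((∫ y, h y ∂μ) - m) * μ {x | h x ≤ ∫ y, h y ∂μ} := by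
  set t := ∫ y, h y ∂μ
  have hmean : ∫ x, (h x - t) ∂μ = 0 := by
    rw [integral_sub hint (integrable_const t), integral_const, probReal_univ, one_smul, sub_self]
  rw [integral_abs_eq_two_mul_integral_negPart (f := fun x => h x - t)
      (hint.sub (integrable_const t)) hmean,
    ENNReal.ofReal_mul zero_le_two, ENNReal.ofReal_ofNat, mul_assoc]
  gcongr
  exact ofReal_integral_negPart_sub_le hint hm

theorem withDensity_apply_le_mul [SFinite μ] {ρ : α → ℝ≥0∞} {c : ℝ≥0∞}
    (hρ : ∀ᵐ x ∂μ, ρ x ≤ c) (s : Set α) :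
    μ.withDensity ρ s ≤ c * μ s := by
  rw [withDensity_apply', ← setLIntegral_const]
  exact lintegral_mono_ae (ae_restrict_of_ae hρ)

end

theorem ENNReal.ofReal_div_mul_le {a b c : ℝ} {v : ℝ≥0∞} (ha : 0 ≤ a)
    (h : ENNReal.ofReal a ≤ ENNReal.ofReal b * ENNReal.ofReal c * v) :
    ENNReal.ofReal (a / (b * c)) ≤ v := by
  rcases le_or_gt b 0 with hb | hb
  · rw [ENNReal.ofReal_of_nonpos hb, zero_mul, zero_mul, nonpos_iff_eq_zero,
      ENNReal.ofReal_eq_zero] at h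
    simp [le_antisymm h ha]
  rcases le_or_gt c 0 with hc | hc
  · rw [ENNReal.ofReal_of_nonpos hc, mul_zero, zero_mul, nonpos_iff_eq_zero,
      ENNReal.ofReal_eq_zero] at h
    simp [le_antisymm h ha]
  rw [ENNReal.ofReal_div_of_pos (_root_.mul_pos hb hc), ENNReal.ofReal_mul hb.le]
  exact ENNReal.div_le_of_le_mul (by rwa [mul_comm v])

theorem stmt6_general (P : Measure ℝ) [IsProbabilityMeasure P]
    (ρ : ℝ → ℝ≥0∞) (hP : P = volume.withDensity ρ)
    (C : ℝ) (hρ : ∀ᵐ s ∂volume, ρ s ≤ ENNReal.ofReal C)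
    (h : ℝ → ℝ) (hint : Integrable h P)
    (m : ℝ) (hm : ∀ᵐ s ∂P, m ≤ h s)
    (hbar : ℝ) (hhbar : hbar = ∫ s, h s ∂P) :
    ENNReal.ofReal ((∫ s, |h s - hbar| ∂P) / (2 * C * (hbar - m))) ≤
      volume {s : ℝ | h s ≤ hbar} := by
  have hS : P {s | h s ≤ hbar} ≤ ENNReal.ofReal C * volume {s | h s ≤ hbar} :=
    hP ▸ withDensity_apply_le_mul hρ _
  refine ENNReal.ofReal_div_mul_le (integral_nonneg fun _ => abs_nonneg _) ?_
  calc ENNReal.ofReal (∫ s, |h s - hbar| ∂P)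
      ≤ 2 * ENNReal.ofReal (hbar - m) * P {s | h s ≤ hbar} :=
        hhbar ▸ ofReal_integral_abs_sub_integral_le hint hm
    _ ≤ 2 * ENNReal.ofReal (hbar - m) * (ENNReal.ofReal C * volume {s | h s ≤ hbar}) := by
        gcongr
    _ = ENNReal.ofReal (2 * C) * ENNReal.ofReal (hbar - m) * volume {s | h s ≤ hbar} := by
        rw [ENNReal.ofReal_mul zero_le_two, ENNReal.ofReal_ofNat]
        ring

theorem stmt6 (P : Measure ℝ) [IsProbabilityMeasure P]
    (ρ : ℝ → ℝ≥0∞) (hP : P = volume.withDensity ρ)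
    (C : ℝ) (hC : 0 < C) (hρ : ∀ᵐ s ∂volume, ρ s ≤ ENNReal.ofReal C)
    (h : ℝ → ℝ) (hint : Integrable h P)
    (m : ℝ) (hm : ∀ᵐ s ∂P, m ≤ h s)
    (hbar : ℝ) (hhbar : hbar = ∫ s, h s ∂P) (hgt : m < hbar) :
    ENNReal.ofReal ((∫ s, |h s - hbar| ∂P) / (2 * C * (hbar - m))) ≤
      volume {s : ℝ | h s ≤ hbar} :=
  stmt6_general P ρ hP C hρ h hint m hm hbar hhbar
end

section
/- Let (M, dist) be a metric space equipped with a Borel measure μ, let d ≥ 0, and let ν denote the d-dimensional Hausdorff measure on M. Let A₁, A₂ ⊆ M be disjoint nonempty open sets with ν(∂A₁) ≤ ν(∂A₂), where ∂ denotes the topological frontier in M. Define Ã₁ := interior(closure(A₁)) and Ã₂ := M \ closure(A₁). Then: (i) Ã₁ and Ã₂ are disjoint open sets with A₁ ⊆ Ã₁ and A₂ ⊆ Ã₂; (ii) ∂Ã₁ ⊆ ∂A₁ and ∂Ã₂ ⊆ ∂A₁; (iii) M = Ã₁ ∪ Ã₂ ∪ ∂(closure A₁); and (iv) max(ν(∂Ã₁)/μ(Ã₁),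 ν(∂Ã₂)/μ(Ã₂)) ≤ max(ν(∂A₁)/μ(A₁), ν(∂A₂)/μ(A₂)), where the ratios are taken in the extended nonnegative reals. -/
open MeasureTheory Set
open scoped ENNReal

theorem stmt8 {M : Type*} [MetricSpace M] [MeasurableSpace M] [BorelSpace M]
    (μ : Measure M) (d : ℝ) (hd : 0 ≤ d)
    (A₁ A₂ : Set M) (h1 : IsOpen A₁) (h2 : IsOpen A₂)
    (hne1 : A₁.Nonempty) (hne2 : A₂.Nonempty) (hdisj : Disjoint A₁ A₂)
    (hbd : μH[d] (frontier A₁) ≤ μH[d] (frontier A₂)) :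
    -- (i)
    (Disjoint (interior (closure A₁)) ((closure A₁)ᶜ) ∧
      IsOpen (interior (closure A₁)) ∧ IsOpen ((closure A₁)ᶜ) ∧
      A₁ ⊆ interior (closure A₁) ∧ A₂ ⊆ (closure A₁)ᶜ) ∧
    -- (ii)
    (frontier (interior (closure A₁)) ⊆ frontier A₁ ∧
      frontier ((closure A₁)ᶜ) ⊆ frontier A₁) ∧
    -- (iii)
    (interior (closure A₁) ∪ (closure A₁)ᶜ ∪ frontier (closure A₁) =
      Set.univ) ∧
    -- (iv)
    max (μH[d] (frontier (interior (closure A₁))) / μ (interior (closure A₁)))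
        (μH[d] (frontier ((closure A₁)ᶜ)) / μ ((closure A₁)ᶜ)) ≤
      max (μH[d] (frontier A₁) / μ A₁) (μH[d] (frontier A₂) / μ A₂) := by
  have hsub1 : A₁ ⊆ interior (closure A₁) :=
    h1.subset_interior_iff.mpr subset_closure
  have hA2c : closure A₁ ⊆ A₂ᶜ :=
    closure_minimal (disjoint_left.mp hdisj) h2.isClosed_compl
  have hsub2 : A₂ ⊆ (closure A₁)ᶜ := fun x hx hx' => hA2c hx' hx
  have hfr1 : frontier (interior (closure A₁)) ⊆ frontier A₁ :=
    (frontier_interior_subset).trans frontier_closure_subset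
  have hfr2 : frontier ((closure A₁)ᶜ) ⊆ frontier A₁ := by
    rw [frontier_compl]; exact frontier_closure_subset
  refine ⟨⟨?_, isOpen_interior, isClosed_closure.isOpen_compl, hsub1, hsub2⟩,
    ⟨hfr1, hfr2⟩, ?_, ?_⟩
  · exact (disjoint_compl_right.mono_left interior_subset)
  · ext x
    simp only [mem_union, mem_univ, iff_true, frontier,
      isClosed_closure.closure_eq, mem_diff, mem_compl_iff]
    by_cases hx : x ∈ closure A₁ <;> by_cases hx' : x ∈ interior (closure A₁) <;> tauto
  · refine max_le_max ?_ ?_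
    · exact ENNReal.div_le_div (measure_mono hfr1) (measure_mono hsub1)
    · exact le_trans (ENNReal.div_le_div (measure_mono hfr2) (measure_mono hsub2))
        (ENNReal.div_le_div hbd le_rfl)
end

section
/- For every real number a > 0 and every natural number n ≥ 1 with n ≤ a/π, one has ∑_{i=1}^{n} (⌊a − π·i⌋ + 1)² ≤ a³/(3π) + (1/2 + 1/π)·a² + (1 + π/6 + 1/π)·a, where ⌊·⌋ denotes the integer floor. -/
open Real

/-! Bound each summand by `(a + 1 - π i) ^ 2` and compare the sum of squares on the grid of
step `π` with the integral of `t ^ 2`: with `u = a + 1 - π i`, one has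
`u ^ 2 ≤ ((u + π) ^ 3 - u ^ 3) / (3 π)`, so the sum telescopes to at most
`((a + 1) ^ 3 - 1) / (3 π) = a ^ 3 / (3 π) + a ^ 2 / π + a / π`. -/

lemma sq_floor_add_one_le {x : ℝ} (hx : -1 ≤ x) : ((⌊x⌋ : ℝ) + 1) ^ 2 ≤ (x + 1) ^ 2 := by
  have hfloor : (-1 : ℝ) ≤ ⌊x⌋ := by exact_mod_cast Int.le_floor.mpr (by exact_mod_cast hx)
  gcongr
  · linarith
  · exact Int.floor_le x

lemma sq_le_cube_sub_cube_div {u h : ℝ} (hu : 0 ≤ u) (hh : 0 < h) :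
    u ^ 2 ≤ ((u + h) ^ 3 - u ^ 3) / (3 * h) := by
  rw [le_div_iff₀ (by positivity)]
  nlinarith [mul_nonneg hu (sq_nonneg h), pow_pos hh 3]

lemma sum_Icc_sq_sub_mul_le {c h : ℝ} (hh : 0 < h) {n : ℕ} (hn : h * n ≤ c) :
    ∑ i ∈ Finset.Icc 1 n, (c - h * i) ^ 2 ≤ (c ^ 3 - (c - h * n) ^ 3) / (3 * h) := by
  induction n with
  | zero => simp
  | succ n ih =>
    rw [Finset.sum_Icc_succ_top (Nat.le_add_left 1 n)]
    push_cast at hn ⊢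
    have hlast := sq_le_cube_sub_cube_div (u := c - h * (n + 1)) (by linarith) hh
    rw [show c - h * (n + 1) + h = c - h * n by ring] at hlast
    have hprev := ih (by linarith)
    have hsplit : (c ^ 3 - (c - h * (n + 1)) ^ 3) / (3 * h) =
        (c ^ 3 - (c - h * n) ^ 3) / (3 * h) + ((c - h * n) ^ 3 - (c - h * (n + 1)) ^ 3) / (3 * h) := by
      ring
    linarith

theorem stmt16_general (a : ℝ) (n : ℕ)
    (hna : (n : ℝ) ≤ a / π) :
    ∑ i ∈ Finset.Icc 1 n, ((⌊a - π * (i : ℝ)⌋ : ℝ) + 1) ^ 2 ≤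
      a ^ 3 / (3 * π) + (1 / 2 + 1 / π) * a ^ 2 + (1 + π / 6 + 1 / π) * a := by
  have hπn : π * n ≤ a := by rwa [le_div_iff₀ pi_pos, mul_comm] at hna
  have ha : 0 ≤ a := le_trans (by positivity) hπn
  have hlast : 1 ≤ (a + 1 - π * n) ^ 3 := one_le_pow₀ (by linarith)
  calc ∑ i ∈ Finset.Icc 1 n, ((⌊a - π * (i : ℝ)⌋ : ℝ) + 1) ^ 2
      ≤ ∑ i ∈ Finset.Icc 1 n, (a + 1 - π * i) ^ 2 := by
        refine Finset.sum_le_sum fun i hi => ?_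
        have hin : π * i ≤ π * n := by gcongr; exact_mod_cast (Finset.mem_Icc.mp hi).2
        rw [add_sub_right_comm]
        exact sq_floor_add_one_le (by linarith)
    _ ≤ ((a + 1) ^ 3 - (a + 1 - π * n) ^ 3) / (3 * π) :=
        sum_Icc_sq_sub_mul_le pi_pos (by linarith)
    _ ≤ ((a + 1) ^ 3 - 1) / (3 * π) := by gcongr
    _ = a ^ 3 / (3 * π) + (1 / π) * a ^ 2 + (1 / π) * a := by field_simp; ring
    _ ≤ _ := by nlinarith [pi_pos]

theorem stmt16 (a : ℝ) (ha : 0 < a) (n : ℕ) (hn : 1 ≤ n)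
    (hna : (n : ℝ) ≤ a / π) :
    ∑ i ∈ Finset.Icc 1 n, ((⌊a - π * (i : ℝ)⌋ : ℝ) + 1) ^ 2 ≤
      a ^ 3 / (3 * π) + (1 / 2 + 1 / π) * a ^ 2 + (1 + π / 6 + 1 / π) * a :=
  stmt16_general a n hna
end
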